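/- arXiv:2004.13213 — 6 statements merged into one kernel-verified Lean document; each statement's English description precedes it below -/
import Mathlib

section
/- Let r ≥ 2 and let κ be a nontrivial element of the cyclic group of order r. The number of ways to write κ as an ordered product of m nontrivial elements of the group equals ((r-1)^m - (-1)^m) / r. -/
/-- `cyclicFac r m κ` is the number of `m`-tuples of nonzero elements of the
additive cyclic group `ZMod r` whose sum is `κ`. -/
noncomputable def cyclicFac (r m : ℕ) (κ : ZMod r) : ℕ :=
  Nat.card {t : Fin m → ZMod r // (∀ i, t i ≠ 0) ∧ ∑ i, t i = κ}

/-!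
Let `f_m(κ)` count the `m`-tuples of nonzero elements of a finite abelian group `G` summing
to `κ`. Splitting off the first entry gives `f_{m+1}(κ) = ∑_{x ≠ 0} f_m(κ - x)`, and since
`∑_κ f_m(κ) = (|G| - 1)^m` counts all nonzero `m`-tuples, this is `(|G| - 1)^m - f_m(κ)`.
With `f_0(κ) = 0` for `κ ≠ 0`, induction gives `|G| f_m(κ) = (|G| - 1)^m - (-1)^m`.
-/

open Finset

section NonzeroCompositions

variable {G : Type*} [AddCommGroup G] [Fintype G] [DecidableEq G]

variable (G) in
def nonzeroCompositions (m : ℕ) (κ : G) : Finset (Fin m → G) :=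
  {t | (∀ i, t i ≠ 0) ∧ ∑ i, t i = κ}

@[simp]
theorem mem_nonzeroCompositions {m : ℕ} {κ : G} {t : Fin m → G} :
    t ∈ nonzeroCompositions G m κ ↔ (∀ i, t i ≠ 0) ∧ ∑ i, t i = κ := by
  simp [nonzeroCompositions]

theorem nonzeroCompositions_zero {κ : G} (hκ : κ ≠ 0) : nonzeroCompositions G 0 κ = ∅ := by
  ext t
  simpa using hκ.symm

theorem sum_card_nonzeroCompositions (m : ℕ) :
    ∑ κ, #(nonzeroCompositions G m κ) = (Fintype.card G - 1) ^ m := by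
  have hfiber : ∑ κ, #(nonzeroCompositions G m κ) =
      #(Fintype.piFinset fun _ : Fin m => univ.erase (0 : G)) := by
    rw [card_eq_sum_card_fiberwise (f := fun t => ∑ i, t i) fun _ _ => mem_univ _]
    congr! 2 with κ
    ext t
    simp
  rw [hfiber, Fintype.card_piFinset, prod_const, card_erase_of_mem (mem_univ _), card_univ,
    card_univ, Fintype.card_fin]

theorem card_nonzeroCompositions_succ (m : ℕ) (κ : G) :
    #(nonzeroCompositions G (m + 1) κ) =
      ∑ x ∈ univ.erase 0, #(nonzeroCompositions G m (κ - x)) := by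
  rw [← card_sigma]
  refine card_nbij' (fun t => ⟨t 0, Fin.tail t⟩) (fun p => Fin.cons p.1 p.2) ?_ ?_ ?_ ?_
  · intro t ht
    simp_all [Fin.sum_univ_succ, Fin.tail, eq_sub_iff_add_eq']
  · rintro ⟨x, s⟩ hs
    simp_all [Fin.sum_univ_succ, Fin.forall_fin_succ]
  · intro t _
    exact Fin.cons_self_tail t
  · rintro ⟨x, s⟩ _
    simp

theorem card_nonzeroCompositions_succ_add (m : ℕ) (κ : G) :
    #(nonzeroCompositions G (m + 1) κ) + #(nonzeroCompositions G m κ) =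
      (Fintype.card G - 1) ^ m := by
  rw [card_nonzeroCompositions_succ]
  nth_rw 2 [← sub_zero κ]
  rw [sum_erase_add _ _ (mem_univ 0)]
  exact (Equiv.subLeft κ).sum_comp _ |>.trans (sum_card_nonzeroCompositions m)

theorem card_mul_card_nonzeroCompositions {κ : G} (hκ : κ ≠ 0) (m : ℕ) :
    (Fintype.card G : ℤ) * #(nonzeroCompositions G m κ) =
      ((Fintype.card G : ℤ) - 1) ^ m - (-1) ^ m := by
  induction m with
  | zero => simp [nonzeroCompositions_zero hκ]
  | succ m ih =>
    have hrec : (#(nonzeroCompositions G (m + 1) κ) : ℤ) =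
        ((Fintype.card G : ℤ) - 1) ^ m - #(nonzeroCompositions G m κ) := by
      rw [eq_sub_iff_add_eq, ← Nat.cast_add, card_nonzeroCompositions_succ_add, Nat.cast_pow,
        Nat.cast_pred Fintype.card_pos]
    rw [hrec, mul_sub, ih]
    ring

end NonzeroCompositions

theorem cyclicFac_eq_card_nonzeroCompositions (r m : ℕ) [NeZero r] (κ : ZMod r) :
    cyclicFac r m κ = #(nonzeroCompositions (ZMod r) m κ) := by
  rw [cyclicFac, Nat.card_eq_fintype_card, Fintype.card_subtype]
  rfl

/-- For `r ≥ 2` and a nontrivial element `κ` of the cyclic group of order `r`,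
the number of ways to write `κ` as an ordered product of `m` nontrivial
elements equals `((r-1)^m - (-1)^m)/r`. -/
theorem cyclicFac_ne_one (r : ℕ) (hr : 2 ≤ r) (κ : ZMod r) (hκ : κ ≠ 0) (m : ℕ) :
    (r : ℤ) * cyclicFac r m κ = ((r : ℤ) - 1) ^ m - (-1) ^ m := by
  have : NeZero r := ⟨by omega⟩
  simpa [cyclicFac_eq_card_nonzeroCompositions] using card_mul_card_nonzeroCompositions hκ m
end

section
/- Let r ≥ 2. The exponential generating function of the counts f_m^0 of m-tuples of nonzero elements of ZMod r summing to 0 equals (1/r)(exp((r-1)X) - exp(-X)) + exp(-X) as formal power series over ℚ. -/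
open PowerSeries

theorem Nat.card_subtype_and_add_card_subtype_and_not {α : Type*} [Finite α] (p q : α → Prop) :
    Nat.card {x // p x ∧ q x} + Nat.card {x // p x ∧ ¬q x} = Nat.card {x // p x} := by
  classical
  rw [← Nat.card_sum]
  exact Nat.card_congr (((Equiv.subtypeSubtypeEquivSubtypeInter p q).symm.sumCongr
    (Equiv.subtypeSubtypeEquivSubtypeInter p (¬q ·)).symm).trans (Equiv.sumCompl _))

theorem Nat.card_subtype_ne {α : Type*} [Finite α] (a : α) :
    Nat.card {x // x ≠ a} = Nat.card α - 1 := by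
  have := Fintype.ofFinite α
  classical
  simp [Nat.card_eq_fintype_card, Fintype.card_subtype_compl]

theorem Nat.card_pi_ne {α : Type*} [Finite α] (a : α) (m : ℕ) :
    Nat.card {t : Fin m → α // ∀ i, t i ≠ a} = (Nat.card α - 1) ^ m := by
  rw [Nat.card_congr (Equiv.subtypePiEquivPi (p := fun _ x => x ≠ a)), Nat.card_pi]
  simp [Nat.card_subtype_ne]

section ZeroSumTuples

variable (G : Type*) [AddCommGroup G]

def zeroSumSnocEquiv (m : ℕ) :
    {t : Fin (m + 1) → G // (∀ i, t i ≠ 0) ∧ ∑ i, t i = 0} ≃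
      {s : Fin m → G // (∀ i, s i ≠ 0) ∧ ∑ i, s i ≠ 0} where
  toFun t := ⟨Fin.init t.1, fun i => t.2.1 _, fun h => t.2.1 (Fin.last m) <| by
    have hsum := t.2.2
    rwa [Fin.sum_univ_castSucc, show ∑ i : Fin m, t.1 i.castSucc = 0 from h, zero_add] at hsum⟩
  invFun s := ⟨Fin.snoc s.1 (-∑ i, s.1 i), fun i => by
      induction i using Fin.lastCases with
      | last => simpa using s.2.2
      | cast i => simpa using s.2.1 i,
    by simp [Fin.sum_univ_castSucc]⟩
  left_inv t := by
    ext1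
    conv_rhs => rw [← Fin.snoc_init_self t.1]
    have hsum := t.2.2
    rw [Fin.sum_univ_castSucc] at hsum
    simp [Fin.init, eq_neg_of_add_eq_zero_right hsum]
  right_inv s := by ext1; simp

variable [Finite G]

theorem card_zeroSum_succ_add_card_zeroSum (m : ℕ) :
    Nat.card {t : Fin (m + 1) → G // (∀ i, t i ≠ 0) ∧ ∑ i, t i = 0} +
        Nat.card {t : Fin m → G // (∀ i, t i ≠ 0) ∧ ∑ i, t i = 0} =
      (Nat.card G - 1) ^ m := by
  rw [Nat.card_congr (zeroSumSnocEquiv G m), add_comm, ← Nat.card_pi_ne (0 : G)]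
  exact Nat.card_subtype_and_add_card_subtype_and_not _ _

theorem card_zeroSum_eq (m : ℕ) :
    (Nat.card {t : Fin m → G // (∀ i, t i ≠ 0) ∧ ∑ i, t i = 0} : ℚ) =
      (((Nat.card G : ℚ) - 1) ^ m + ((Nat.card G : ℚ) - 1) * (-1) ^ m) / Nat.card G := by
  have hG : (Nat.card G : ℚ) ≠ 0 := by exact_mod_cast Nat.card_pos.ne'
  induction m with
  | zero => field_simp; simp
  | succ m ih =>
    have hrec := congrArg (Nat.cast : ℕ → ℚ) (card_zeroSum_succ_add_card_zeroSum G m)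
    push_cast [Nat.cast_sub (Nat.card_pos (α := G))] at hrec
    rw [eq_sub_of_add_eq hrec, ih]
    field_simp
    ring

end ZeroSumTuples

/-- For `r ≥ 2`, the exponential generating function of the counts `f_m^0` of
`m`-tuples of nonzero elements of `ZMod r` summing to `0` equals
`(1/r)(exp((r-1)X) - exp(-X)) + exp(-X)` in `ℚ[[X]]`. -/
theorem cyclicFac_egf_one (r : ℕ) (hr : 2 ≤ r) :
    PowerSeries.mk (fun m => (cyclicFac r m (0 : ZMod r) : ℚ) / m.factorial) =
      PowerSeries.C (1 / r : ℚ) *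
        (PowerSeries.rescale ((r : ℚ) - 1) (PowerSeries.exp ℚ) -
          PowerSeries.rescale (-1 : ℚ) (PowerSeries.exp ℚ)) +
      PowerSeries.rescale (-1 : ℚ) (PowerSeries.exp ℚ) := by
  have : NeZero r := ⟨by omega⟩
  ext n
  rw [coeff_mk, cyclicFac, card_zeroSum_eq, Nat.card_zmod]
  simp only [map_add, map_sub, coeff_C_mul, coeff_rescale, coeff_exp, Algebra.algebraMap_self,
    RingHom.id_apply]
  field_simp
  ring
end

section
/- Let γ be a graph on vertex set [n] given by an ordered list of edges E = (e_1, ..., e_m), each edge a multiset {i,j} of size two with i,j ∈ [n] (self-edges allowed). For each vertex i, let w_i be the ordered edge walk starting at i that repeatedly follows the next (in the edge ordering) edge incident to the current vertex. Then every directed edge of γ (an edge together with an orientation; self-edges have one orientation) occurs as a step in exactly one of the walks w_1, ..., w_n. -/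
/-- The steps of the sequential ordered edge walk: `walkAux E v p` follows,
starting at vertex `v` with the edges of `E` occupying positions `p, p+1, …`,
the first edge incident to the current vertex, records the traversed directed
edge `(position, source, target)`, and continues from the next position. -/
def walkAux {n : ℕ} : List (Sym2 (Fin n)) → Fin n → ℕ → List (ℕ × Fin n × Fin n)
  | [], _, _ => []
  | e :: rest, v, p =>
    if h : v ∈ e then (p, v, Sym2.Mem.other' h) :: walkAux rest (Sym2.Mem.other' h) (p + 1)
    else walkAux rest v (p + 1)

/-- The ordered edge walk `w_v` of an ordered graph `E`, starting at vertex `v`: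
its list of directed steps `(position in E, source vertex, target vertex)`. -/
def walkSteps {n : ℕ} (E : List (Sym2 (Fin n))) (v : Fin n) : List (ℕ × Fin n × Fin n) :=
  walkAux E v 0

lemma walkAux_pos_le {n : ℕ} : ∀ (E : List (Sym2 (Fin n))) (v : Fin n) (q p : ℕ)
    (a b : Fin n), (p, a, b) ∈ walkAux E v q → q ≤ p := by
  intro E
  induction E with
  | nil => intro v q p a b h; simp [walkAux] at h
  | cons e rest ih =>
    intro v q p a b h
    rw [walkAux] at h
    split at h
    · rcases List.mem_cons.mp h with h | h
      · obtain ⟨h1, -⟩ := Prod.mk.injEq .. ▸ h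
        omega
      · have := ih _ _ _ _ _ h; omega
    · have := ih _ _ _ _ _ h; omega

/-- The vertex after one edge: the other endpoint if incident, otherwise stay. -/
def stepVert {n : ℕ} (e : Sym2 (Fin n)) (v : Fin n) : Fin n :=
  if h : v ∈ e then Sym2.Mem.other' h else v

lemma stepVert_invol {n : ℕ} (e : Sym2 (Fin n)) (v : Fin n) :
    stepVert e (stepVert e v) = v := by
  by_cases h : v ∈ e
  · have h1 : stepVert e v = Sym2.Mem.other' h := dif_pos h
    have h2 : Sym2.Mem.other' h ∈ e := Sym2.other_mem' h
    rw [h1, stepVert, dif_pos h2]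
    exact Sym2.other_invol' h h2
  · simp [stepVert, h]

lemma walkAux_cons {n : ℕ} (e : Sym2 (Fin n)) (rest : List (Sym2 (Fin n))) (v : Fin n)
    (q : ℕ) : walkAux (e :: rest) v q =
      (if h : v ∈ e then [(q, v, Sym2.Mem.other' h)] else []) ++
        walkAux rest (stepVert e v) (q + 1) := by
  by_cases h : v ∈ e <;> simp [walkAux, stepVert, h]

lemma aux_unique {n : ℕ} : ∀ (E : List (Sym2 (Fin n))) (q k : ℕ) (hk : k < E.length)
    (i j : Fin n), E.get ⟨k, hk⟩ = s(i, j) →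
    ∃! v : Fin n, (q + k, i, j) ∈ walkAux E v q := by
  intro E
  induction E with
  | nil => intro q k hk; simp at hk
  | cons e rest ih =>
    intro q k hk i j he
    cases k with
    | zero =>
      have he' : e = s(i, j) := by simpa using he
      have hi : i ∈ e := by rw [he']; exact Sym2.mem_mk_left i j
      have hoth : Sym2.Mem.other' hi = j := by
        have hs := (Sym2.other_spec' hi).trans he'
        exact Sym2.congr_right.mp hs
      simp only [Nat.add_zero]
      refine ⟨i, ?_, ?_⟩
      · show (q, i, j) ∈ walkAux (e :: rest) i q
        rw [walkAux_cons, dif_pos hi, hoth]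
        simp
      · intro v hv
        rw [walkAux_cons] at hv
        rcases List.mem_append.mp hv with h | h
        · split at h
          · simp only [List.mem_singleton, Prod.mk.injEq] at h
            exact h.2.1.symm
          · simp at h
        · have := walkAux_pos_le _ _ _ _ _ _ h; omega
    | succ k =>
      have hk' : k < rest.length := by simpa using hk
      have he' : rest.get ⟨k, hk'⟩ = s(i, j) := by simpa using he
      obtain ⟨u, hu, huniq⟩ := ih (q + 1) k hk' i j he'
      have hpos : q + (k + 1) = (q + 1) + k := by omega
      have key : ∀ v : Fin n, (q + (k + 1), i, j) ∈ walkAux (e :: rest) v q ↔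
          ((q + 1) + k, i, j) ∈ walkAux rest (stepVert e v) (q + 1) := by
        intro v
        rw [walkAux_cons, hpos]
        constructor
        · intro h
          rcases List.mem_append.mp h with h | h
          · split at h
            · simp only [List.mem_singleton, Prod.mk.injEq] at h
              omega
            · simp at h
          · exact h
        · intro h; exact List.mem_append.mpr (Or.inr h)
      refine ⟨stepVert e u, ?_, ?_⟩
      · exact (key (stepVert e u)).mpr (by rw [stepVert_invol]; exact hu)
      · intro v hv
        have h2 := huniq _ ((key v).mp hv)
        calc v = stepVert e (stepVert e v) := (stepVert_invol e v).symm
          _ = stepVert e u := by rw [h2]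

/-- Every directed edge of an ordered graph (an edge position together with an
orientation of that edge) occurs as a step of exactly one of the ordered edge
walks `w_1, …, w_n`. -/
theorem directed_edge_unique_walk {n : ℕ} (E : List (Sym2 (Fin n)))
    (p : ℕ) (hp : p < E.length) (i j : Fin n) (he : E.get ⟨p, hp⟩ = s(i, j)) :
    ∃! v : Fin n, (p, i, j) ∈ walkSteps E v := by
  have := aux_unique E 0 p hp i j he
  simpa [walkSteps] using this
end

section
/- Let γ be an ordered graph on [n] as above. Each non-self edge e occurs as a step on exactly two of the walks w_1,...,w_n (once in each orientation, on walks starting at two distinct vertices), and each self-edge occurs as a step on exactly one walk. -/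
def stepMap {n : ℕ} (e : Sym2 (Fin n)) (v : Fin n) : Fin n :=
  if h : v ∈ e then Sym2.Mem.other' h else v

def state {n : ℕ} : List (Sym2 (Fin n)) → Fin n → Fin n
  | [], v => v
  | e :: rest, v => state rest (stepMap e v)

lemma stepMap_invol {n : ℕ} (e : Sym2 (Fin n)) (v : Fin n) : stepMap e (stepMap e v) = v := by
  unfold stepMap
  split
  · rename_i h
    have h2 : Sym2.Mem.other' h ∈ e := Sym2.other_mem' h
    simp only [h2, dif_pos]
    exact Sym2.other_invol' h h2
  · rename_i h
    simp [h]

lemma state_injective {n : ℕ} (E : List (Sym2 (Fin n))) : Function.Injective (state E) := by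
  induction E with
  | nil => intro a b h; exact h
  | cons e rest ih =>
    intro a b h
    have := ih h
    calc a = stepMap e (stepMap e a) := (stepMap_invol e a).symm
    _ = stepMap e (stepMap e b) := by rw [this]
    _ = b := stepMap_invol e b

lemma state_surjective {n : ℕ} (E : List (Sym2 (Fin n))) : Function.Surjective (state E) :=
  Finite.surjective_of_injective (state_injective E)

lemma mem_walkAux {n : ℕ} : ∀ (E : List (Sym2 (Fin n))) (v : Fin n) (q p : ℕ) (a b : Fin n),
    (p, a, b) ∈ walkAux E v q ↔
      ∃ (k : ℕ) (hk : k < E.length), p = q + k ∧ a = state (E.take k) v ∧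
        ∃ h : a ∈ E.get ⟨k, hk⟩, b = Sym2.Mem.other' h := by
  intro E
  induction E with
  | nil => intro v q p a b; simp [walkAux]
  | cons e rest ih =>
    intro v q p a b
    constructor
    · intro hmem
      unfold walkAux at hmem
      split at hmem
      · rename_i hv
        rcases List.mem_cons.mp hmem with h1 | h2
        · obtain ⟨hp, ha, hb⟩ : p = q ∧ a = v ∧ b = Sym2.Mem.other' hv := by
            simpa [Prod.ext_iff] using h1
          subst ha
          exact ⟨0, by simp, by omega, rfl, hv, hb⟩
        · obtain ⟨k, hk, hpk, ha, h, hb⟩ := (ih _ _ _ _ _).mp h2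
          refine ⟨k + 1, by simpa using hk, by omega, ?_, ?_⟩
          · simpa [state, stepMap, hv] using ha
          · exact ⟨h, hb⟩
      · rename_i hv
        obtain ⟨k, hk, hpk, ha, h, hb⟩ := (ih _ _ _ _ _).mp hmem
        refine ⟨k + 1, by simpa using hk, by omega, ?_, ?_⟩
        · simpa [state, stepMap, hv] using ha
        · exact ⟨h, hb⟩
    · rintro ⟨k, hk, hpk, ha, h, hb⟩
      unfold walkAux
      match k with
      | 0 =>
        simp only [List.take_zero, state] at ha
        subst ha
        simp only [List.get] at h
        rw [dif_pos h]
        subst hb hpk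
        simp
      | k + 1 =>
        have ha' : a = state (rest.take k) (stepMap e v) := by
          simpa [state] using ha
        have h' : a ∈ rest.get ⟨k, by simpa using hk⟩ := h
        have hmem' : (p, a, b) ∈ walkAux rest (stepMap e v) (q + 1) :=
          (ih _ _ _ _ _).mpr ⟨k, by simpa using hk, by omega, ha', h', hb⟩
        split
        · rename_i hv
          have : stepMap e v = Sym2.Mem.other' hv := by simp [stepMap, hv]
          rw [this] at hmem'
          exact List.mem_cons_of_mem _ hmem'
        · rename_i hv
          have : stepMap e v = v := by simp [stepMap, hv]
          rwa [this] at hmem'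

lemma mem_walkSteps {n : ℕ} (E : List (Sym2 (Fin n))) (v : Fin n) (p : ℕ) (a b : Fin n) :
    (p, a, b) ∈ walkSteps E v ↔
      ∃ (hk : p < E.length), a = state (E.take p) v ∧
        ∃ h : a ∈ E.get ⟨p, hk⟩, b = Sym2.Mem.other' h := by
  rw [walkSteps, mem_walkAux]
  constructor
  · rintro ⟨k, hk, hpk, rest⟩
    have : k = p := by omega
    subst this; exact ⟨hk, rest⟩
  · rintro ⟨hk, rest⟩
    exact ⟨p, hk, by omega, rest⟩

lemma other'_eq {n : ℕ} {z : Sym2 (Fin n)} {a j : Fin n} (h : a ∈ z) (hz : z = s(a, j)) :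
    Sym2.Mem.other' h = j :=
  Sym2.congr_right.mp (by rw [Sym2.other_spec' h, hz])

/-- Each non-self edge of an ordered graph occurs as a step on exactly two of
the ordered edge walks `w_1, …, w_n` (once in each orientation, on walks
starting at two distinct vertices), and each self-edge occurs as a step on
exactly one walk. -/
theorem edge_walk_count {n : ℕ} (E : List (Sym2 (Fin n))) (p : ℕ) (hp : p < E.length) :
    (∀ i j : Fin n, i ≠ j → E.get ⟨p, hp⟩ = s(i, j) →
      ∃ u v : Fin n, u ≠ v ∧ (p, i, j) ∈ walkSteps E u ∧ (p, j, i) ∈ walkSteps E v ∧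
        ∀ w a b : Fin n, (p, a, b) ∈ walkSteps E w → w = u ∨ w = v) ∧
    (∀ i : Fin n, E.get ⟨p, hp⟩ = s(i, i) →
      ∃ u : Fin n, (p, i, i) ∈ walkSteps E u ∧
        ∀ w a b : Fin n, (p, a, b) ∈ walkSteps E w → w = u) := by
  constructor
  · intro i j hij he
    obtain ⟨u, hu⟩ := state_surjective (E.take p) i
    obtain ⟨v, hv⟩ := state_surjective (E.take p) j
    have huv : u ≠ v := fun h => hij (by rw [← hu, ← hv, h])
    refine ⟨u, v, huv, ?_, ?_, ?_⟩
    · rw [mem_walkSteps]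
      refine ⟨hp, hu.symm, ?_⟩
      have hi : i ∈ E.get ⟨p, hp⟩ := by rw [he]; exact Sym2.mem_mk_left i j
      exact ⟨hi, (other'_eq hi he).symm⟩
    · rw [mem_walkSteps]
      refine ⟨hp, hv.symm, ?_⟩
      have hj : j ∈ E.get ⟨p, hp⟩ := by rw [he]; exact Sym2.mem_mk_right i j
      exact ⟨hj, (other'_eq hj (he.trans (Sym2.eq_swap))).symm⟩
    · intro w a b hw
      rw [mem_walkSteps] at hw
      obtain ⟨_, haw, h, _⟩ := hw
      rw [he] at h
      rcases Sym2.mem_iff.mp h with ha | ha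
      · left
        apply state_injective (E.take p)
        rw [← haw, ha, hu]
      · right
        apply state_injective (E.take p)
        rw [← haw, ha, hv]
  · intro i he
    obtain ⟨u, hu⟩ := state_surjective (E.take p) i
    refine ⟨u, ?_, ?_⟩
    · rw [mem_walkSteps]
      refine ⟨hp, hu.symm, ?_⟩
      have hi : i ∈ E.get ⟨p, hp⟩ := by rw [he]; exact Sym2.mem_mk_left i i
      exact ⟨hi, (other'_eq hi he).symm⟩
    · intro w a b hw
      rw [mem_walkSteps] at hw
      obtain ⟨_, haw, h, _⟩ := hw
      rw [he] at h
      rcases Sym2.mem_iff.mp h with ha | ha <;>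
      · apply state_injective (E.take p)
        rw [← haw, ha, hu]
end

section
/- Let ω ∈ G(r,s,n) and write ω = ρ_m ⋯ ρ_1 with each ρ_j a reflection of the form σ_{ij}^{k/r} (transpose coordinates i,j and scale by ζ_r^{∓k}) or τ_i^{sk/r} (scale coordinate i by ζ_r^{sk}). Associate to this tuple the ordered labeled graph γ with edge e_j = {i,j} labeled k for ρ_j = σ_{ij}^{k/r} and self-edge {i,i} labeled k for ρ_j = τ_i^{sk/r}. Then for every vertex i, ω(v_i) = ζ_r^{κ(w_i)} v_{h(w_i)}, where w_i is the ordered edge walk from i, h(w_i) its endpoint, and κ(w_i) the signed weight of the walk (up-steps contribute +k, down-steps −k, loops +sk). -/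
def WreathZS (r n : ℕ) : Type := Equiv.Perm (Fin n) × (Fin n → ZMod r)
namespace WreathZS
variable {r n : ℕ}
instance : Mul (WreathZS r n) :=
  ⟨fun x y => (x.1 * y.1, (fun i => x.2 (y.1 i)) + y.2)⟩
instance : One (WreathZS r n) := ⟨((1 : Equiv.Perm (Fin n)), 0)⟩
instance : Inv (WreathZS r n) :=
  ⟨fun x => (x.1⁻¹, fun i => -x.2 (x.1⁻¹ i))⟩
theorem mul_def (x y : WreathZS r n) :
    x * y = (x.1 * y.1, (fun i => x.2 (y.1 i)) + y.2) := rfl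
theorem one_def : (1 : WreathZS r n) = ((1 : Equiv.Perm (Fin n)), 0) := rfl
instance : Group (WreathZS r n) where
  mul_assoc x y z := by
    simp only [mul_def]
    refine Prod.ext (mul_assoc _ _ _) ?_
    funext i
    exact add_assoc _ _ _
  one_mul x := by
    simp only [mul_def, one_def]
    refine Prod.ext (one_mul _) ?_
    funext i; exact zero_add _
  mul_one x := by
    simp only [mul_def, one_def]
    refine Prod.ext (mul_one _) ?_
    funext i; exact add_zero _
  inv_mul_cancel x := by
    show (_, _) = (_, _)
    refine Prod.ext (inv_mul_cancel _) ?_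
    funext i
    simp [Inv.inv]
end WreathZS

/-- The complex reflection group `G(r,s,n)`, modeled as the subgroup of the
wreath product `(ZMod r) ≀ Sₙ` of pairs `(σ, a)` such that `∑ i, a i` is
divisible by `s` in `ZMod r`. -/
def Grsn (r s n : ℕ) : Subgroup (WreathZS r n) where
  carrier := {x | ∃ c : ZMod r, ∑ i, x.2 i = (s : ZMod r) * c}
  mul_mem' := by
    rintro x y ⟨c, hc⟩ ⟨d, hd⟩
    refine ⟨c + d, ?_⟩
    simp only [WreathZS.mul_def, Pi.add_apply]
    rw [Finset.sum_add_distrib, Equiv.sum_comp y.1 x.2, hc, hd, mul_add]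
  one_mem' := ⟨0, by simp [WreathZS.one_def]⟩
  inv_mem' := by
    rintro x ⟨c, hc⟩
    refine ⟨-c, ?_⟩
    show ∑ i, -x.2 (x.1⁻¹ i) = _
    rw [show (∑ i, -x.2 (x.1⁻¹ i)) = ∑ i, (fun j => -x.2 j) (x.1⁻¹ i) from rfl,
      Equiv.sum_comp x.1⁻¹ (fun j => -x.2 j), Finset.sum_neg_distrib, hc]
    ring

/-- `walkEndWt s L v` returns the endpoint and the signed weight `κ` of the
sequential ordered edge walk starting at `v` in the labeled graph `L`: each
traversed non-self edge labeled `k` contributes `+k` if traversed towards the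
larger-indexed vertex (an up-step) and `-k` towards the smaller (a down-step),
while a self-edge labeled `k` contributes `s·k` (a loop). -/
def walkEndWt {n : ℕ} (s : ℕ) : List (Sym2 (Fin n) × ℤ) → Fin n → Fin n × ℤ
  | [], v => (v, 0)
  | (e, k) :: rest, v =>
    if h : v ∈ e then
      let u := Sym2.Mem.other' h
      let w := walkEndWt s rest u
      (w.1, (if u = v then (s : ℤ) * k else if v < u then k else -k) + w.2)
    else walkEndWt s rest v

/-- The reflection of `G(r,s,n)` (in the `(σ, a)` wreath model) associated to a
labeled edge: an edge `{i,j}` with `i < j` labeled `k` gives the reflection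
`σ_{ij}^{k/r}` (the pair `(swap i j, a)` with `a i = k`, `a j = -k`), and a
self-edge `{i,i}` labeled `k` gives `τ_i^{sk/r}` (the pair `(1, a)` with
`a i = s·k`). -/
def reflOf (r s n : ℕ) (ek : Sym2 (Fin n) × ℤ) : WreathZS r n :=
  Sym2.lift
    ⟨fun i j =>
      if i = j then ((1 : Equiv.Perm (Fin n)),
        fun l => if l = i then ((s : ℤ) * ek.2 : ℤ) else 0)
      else (Equiv.swap i j,
        fun l => if l = min i j then ((ek.2 : ℤ) : ZMod r)
          else if l = max i j then (-ek.2 : ℤ) else 0),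
      by
        intro a b
        by_cases h : a = b
        · subst h; simp; rfl
        · simp only [h, Ne.symm h, if_false, ↓reduceIte]
          rw [Equiv.swap_comm, min_comm, max_comm]⟩
    ek.1

/-!
The reflection of a labeled edge sends `v` to the other endpoint of the edge, with the coefficient
`ζ_r` raised to the weight of that step, and fixes every vertex off the edge. Since
`ω = ρ_m ⋯ ρ_1` applies `ρ_1` first, following `v_i` through the product is the same as following
the ordered edge walk from `i`, and the coefficients multiply to `ζ_r^{κ(w_i)}`.
-/

namespace WreathZS

variable {r n : ℕ}

@[simp]
lemma mul_fst_apply (x y : WreathZS r n) (i : Fin n) : (x * y).1 i = x.1 (y.1 i) := rfl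

@[simp]
lemma mul_snd_apply (x y : WreathZS r n) (i : Fin n) :
    (x * y).2 i = x.2 (y.1 i) + y.2 i := rfl

end WreathZS

def stepWeight {n : ℕ} (s : ℕ) (k : ℤ) (v u : Fin n) : ℤ :=
  if u = v then (s : ℤ) * k else if v < u then k else -k

section Walk

variable {n : ℕ} (s : ℕ) (k : ℤ) {e : Sym2 (Fin n)} {v : Fin n}

lemma walkEndWt_cons_of_mem (rest : List (Sym2 (Fin n) × ℤ)) (h : v ∈ e) :
    walkEndWt s ((e, k) :: rest) v =
      ((walkEndWt s rest (Sym2.Mem.other' h)).1,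
        stepWeight s k v (Sym2.Mem.other' h) + (walkEndWt s rest (Sym2.Mem.other' h)).2) := by
  simp only [walkEndWt, dif_pos h]
  rfl

lemma walkEndWt_cons_of_notMem (rest : List (Sym2 (Fin n) × ℤ)) (h : v ∉ e) :
    walkEndWt s ((e, k) :: rest) v = walkEndWt s rest v := by
  simp only [walkEndWt, dif_neg h]

variable (r : ℕ)

lemma reflOf_mk (i j : Fin n) :
    reflOf r s n (s(i, j), k) =
      if i = j then ((1 : Equiv.Perm (Fin n)),
        fun l => if l = i then (((s : ℤ) * k : ℤ) : ZMod r) else 0)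
      else (Equiv.swap i j,
        fun l => if l = min i j then ((k : ℤ) : ZMod r)
          else if l = max i j then ((-k : ℤ) : ZMod r) else 0) := rfl

lemma reflOf_mk_apply_left (v u : Fin n) :
    (reflOf r s n (s(v, u), k)).1 v = u ∧
      (reflOf r s n (s(v, u), k)).2 v = (stepWeight s k v u : ZMod r) := by
  rw [reflOf_mk, stepWeight]
  rcases lt_trichotomy v u with hvu | rfl | hvu
  · simp [hvu.ne, hvu.ne', hvu, min_eq_left hvu.le]
  · simp
  · simp [hvu.ne, hvu.ne', hvu.not_gt, min_eq_right hvu.le, max_eq_left hvu.le]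

lemma reflOf_apply_of_mem (h : v ∈ e) :
    (reflOf r s n (e, k)).1 v = Sym2.Mem.other' h ∧
      (reflOf r s n (e, k)).2 v = (stepWeight s k v (Sym2.Mem.other' h) : ZMod r) := by
  have := reflOf_mk_apply_left s k r v (Sym2.Mem.other' h)
  rwa [Sym2.other_spec' h] at this

lemma reflOf_apply_of_notMem (h : v ∉ e) :
    (reflOf r s n (e, k)).1 v = v ∧ (reflOf r s n (e, k)).2 v = 0 := by
  induction e using Sym2.inductionOn with
  | hf i j =>
    obtain ⟨hi, hj⟩ : v ≠ i ∧ v ≠ j := by simpa [not_or] using h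
    have hmin : v ≠ min i j := by rcases min_choice i j with h' | h' <;> rwa [h']
    have hmax : v ≠ max i j := by rcases max_choice i j with h' | h' <;> rwa [h']
    rw [reflOf_mk]
    by_cases hij : i = j
    · simp [hij, hj]
    · simp [hij, Equiv.swap_apply_of_ne_of_ne hi hj, hmin, hmax]

end Walk

theorem factorization_graph_action_general (r s n : ℕ)
    (L : List (Sym2 (Fin n) × ℤ)) :
    ∀ i : Fin n,
      ((L.map (reflOf r s n)).reverse.prod.1 i = (walkEndWt s L i).1) ∧
      ((L.map (reflOf r s n)).reverse.prod.2 i = ((walkEndWt s L i).2 : ZMod r)) := by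
  induction L with
  | nil => exact fun i => ⟨rfl, by simp [walkEndWt, WreathZS.one_def]⟩
  | cons ek rest ih =>
    obtain ⟨e, k⟩ := ek
    intro i
    simp only [List.map_cons, List.reverse_cons, List.prod_append, List.prod_singleton,
      WreathZS.mul_fst_apply, WreathZS.mul_snd_apply]
    by_cases h : i ∈ e
    · obtain ⟨hσ, ha⟩ := reflOf_apply_of_mem s k r h
      obtain ⟨ih₁, ih₂⟩ := ih (Sym2.Mem.other' h)
      rw [walkEndWt_cons_of_mem s k rest h, hσ, ha, ih₁, ih₂]
      exact ⟨rfl, by push_cast; ring⟩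
    · obtain ⟨hσ, ha⟩ := reflOf_apply_of_notMem s k r h
      rw [walkEndWt_cons_of_notMem s k rest h, hσ, ha, add_zero]
      exact ih i

/-- **Factorizations and ordered edge walks** (Proposition 2.8). If
`ω = ρ_m ⋯ ρ_1 ∈ G(r,s,n)` is a product of reflections encoded by an ordered
labeled graph `L` (edges `{i,j}` labeled `k` with `0 ≤ k < r` for reflections
`σ_{ij}^{k/r}`, self-edges labeled `k` with `0 < k < r/s` for `τ_i^{sk/r}`),
then for every vertex `i`, `ω(v_i) = ζ_r^{κ(w_i)} v_{h(w_i)}`: in the `(σ, a)`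
model, `σ i = h(w_i)` and `a i = κ(w_i) mod r`, where `w_i` is the ordered edge
walk from `i`, `h(w_i)` its endpoint, and `κ(w_i)` its signed weight. -/
theorem factorization_graph_action (r s n : ℕ) (hr : 0 < r) (hs : 0 < s) (hsr : s ∣ r)
    (L : List (Sym2 (Fin n) × ℤ))
    (hlab : ∀ ek ∈ L,
      (ek.1.IsDiag → 0 < ek.2 ∧ ek.2 < ((r / s : ℕ) : ℤ)) ∧
      (¬ ek.1.IsDiag → 0 ≤ ek.2 ∧ ek.2 < (r : ℤ))) :
    ∀ i : Fin n,
      ((L.map (reflOf r s n)).reverse.prod.1 i = (walkEndWt s L i).1) ∧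
      ((L.map (reflOf r s n)).reverse.prod.2 i = ((walkEndWt s L i).2 : ZMod r)) :=
  factorization_graph_action_general r s n L
end

section
/- Let γ be a connected ordered graph on vertex set [n] with edge list E (self-edges allowed), and let E_1 be the non-self edges. Then there exist edges f_1, ..., f_{n-1} ∈ E_1 and a labeling of the vertices [n] = {v_0, ..., v_{n-1}} such that for every ℓ ∈ {1,...,n-1}: (1) f_ℓ is a step on the ordered walk w_{v_ℓ}, and (2) there exists j < ℓ such that f_ℓ is also a step on the walk w_{v_j}. -/
/-!
After the first `p` edges of the list have come up, sending `v` to the current vertex of `w_v`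
is a bijection of `[n]`, so a non-loop edge at position `p` is a step of exactly the two walks
standing at its ends. Call `u` and `w` adjacent when `w_u` and `w_w` share such a step. Each time
`w_x` moves it meets the walk standing at its target, so `x` is connected in this graph to every
vertex that `w_x` visits; hence the ends of each edge of `E` are connected, and the graph is
connected. Listing the vertices by distance to a root, each `v_ℓ` shares a step `f_ℓ` with some
earlier `v_j`, and `f` is injective because `f_ℓ` determines the pair `{v_j, v_ℓ}`, in which `ℓ`
is the larger index.
-/

namespace SimpleGraph

theorem Reachable.exists_adj_dist_lt {V : Type*} {G : SimpleGraph V} {x r : V}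
    (h : G.Reachable x r) (hne : x ≠ r) : ∃ y, G.Adj x y ∧ G.dist y r < G.dist x r := by
  obtain ⟨p, hp⟩ := h.exists_walk_length_eq_dist
  cases p with
  | nil => exact absurd rfl hne
  | cons hadj q =>
    refine ⟨_, hadj, ?_⟩
    rw [← hp, Walk.length_cons]
    exact Nat.lt_succ_of_le (dist_le q)

theorem Preconnected.exists_perm_forall_exists_lt_adj {n : ℕ} {G : SimpleGraph (Fin n)}
    (hG : G.Preconnected) :
    ∃ σ : Equiv.Perm (Fin n), ∀ i : Fin n, 0 < (i : ℕ) → ∃ j < i, G.Adj (σ i) (σ j) := by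
  cases n with
  | zero => exact ⟨1, fun i => i.elim0⟩
  | succ n =>
    -- listing the vertices by increasing distance to a root puts a neighbour nearer to the
    -- root before every other vertex
    set d : Fin (n + 1) → ℕ := fun x => G.dist x 0
    refine ⟨Tuple.sort d, fun i hi => ?_⟩
    have hmono := Tuple.monotone_sort d
    set σ := Tuple.sort d
    have hne : σ i ≠ 0 := by
      intro h0
      have h : d (σ 0) ≤ d (σ i) := hmono (Fin.zero_le i)
      have : σ 0 = 0 := by simpa [d, h0, (hG _ _).dist_eq_zero_iff] using h
      exact hi.ne (by simpa using congrArg Fin.val (σ.injective (this.trans h0.symm)))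
    obtain ⟨y, hadj, hlt⟩ := (hG (σ i) 0).exists_adj_dist_lt hne
    refine ⟨σ.symm y, ?_, by simpa using hadj⟩
    by_contra! hle
    have := hmono hle
    simp only [Function.comp_apply, Equiv.apply_symm_apply] at this
    exact absurd hlt (not_lt.2 this)

end SimpleGraph

namespace OrderedGraph

variable {n : ℕ}

def cross (e : Sym2 (Fin n)) (v : Fin n) : Fin n :=
  if h : v ∈ e then Sym2.Mem.other' h else v

/-- `position (E.take p) v` is the vertex at which `w_v` stands when the edge at position `p`
comes up. -/
def position (E : List (Sym2 (Fin n))) (v : Fin n) : Fin n :=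
  E.foldl (fun w e => cross e w) v

theorem cross_involutive (e : Sym2 (Fin n)) : Function.Involutive (cross e) := by
  intro v
  by_cases h : v ∈ e
  · simp [cross, h, Sym2.other_mem', Sym2.other_invol']
  · simp [cross, h]

theorem cross_mem {e : Sym2 (Fin n)} {v : Fin n} (h : v ∈ e) : cross e v ∈ e := by
  simpa [cross, h] using Sym2.other_mem' h

theorem position_bijective (E : List (Sym2 (Fin n))) : Function.Bijective (position E) := by
  induction E with
  | nil => exact Function.bijective_id
  | cons e E ih => exact ih.comp (cross_involutive e).bijective

theorem position_append_singleton (E : List (Sym2 (Fin n))) (e : Sym2 (Fin n)) (v : Fin n) :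
    position (E ++ [e]) v = cross e (position E v) := by
  simp [position]

theorem walkAux_cons (e : Sym2 (Fin n)) (E : List (Sym2 (Fin n))) (v : Fin n) (p : ℕ) :
    walkAux (e :: E) v p =
      (if v ∈ e then [(p, v, cross e v)] else []) ++ walkAux E (cross e v) (p + 1) := by
  by_cases h : v ∈ e <;> simp [walkAux, cross, h]

theorem mem_walkAux {E : List (Sym2 (Fin n))} {v : Fin n} {k : ℕ} (hk : k < E.length)
    (h : position (E.take k) v ∈ E[k]) (p : ℕ) :
    (p + k, position (E.take k) v, cross E[k] (position (E.take k) v)) ∈ walkAux E v p := by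
  induction E generalizing v k p with
  | nil => simp at hk
  | cons e E ih =>
    rw [walkAux_cons]
    cases k with
    | zero => simp_all [position]
    | succ k =>
      have := ih (Nat.lt_of_succ_lt_succ hk) h (p + 1)
      rw [← Nat.add_assoc, Nat.add_right_comm]
      exact List.mem_append_right _ this

theorem exists_mem_walkSteps {E : List (Sym2 (Fin n))} {v : Fin n} {k : ℕ} (hk : k < E.length)
    (h : position (E.take k) v ∈ E[k]) : ∃ a b, (k, a, b) ∈ walkSteps E v :=
  ⟨_, _, by simpa [walkSteps] using mem_walkAux hk h 0⟩

def CrossTogether (E : List (Sym2 (Fin n))) (p : ℕ) (u w : Fin n) : Prop :=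
  ∃ hp : p < E.length,
    position (E.take p) u ∈ E[p] ∧ position (E.take p) w ∈ E[p] ∧ u ≠ w

namespace CrossTogether

variable {E : List (Sym2 (Fin n))} {p : ℕ} {u w : Fin n}

theorem symm (h : CrossTogether E p u w) : CrossTogether E p w u :=
  let ⟨hp, hu, hw, hne⟩ := h
  ⟨hp, hw, hu, hne.symm⟩

theorem edge_eq (h : CrossTogether E p u w) :
    E[p]'h.1 = s(position (E.take p) u, position (E.take p) w) :=
  let ⟨_, hu, hw, hne⟩ := h
  (Sym2.mem_and_mem_iff ((position_bijective _).1.ne hne)).1 ⟨hu, hw⟩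

theorem not_isDiag (h : CrossTogether E p u w) : ¬ (E[p]'h.1).IsDiag := by
  rw [h.edge_eq, Sym2.mk_isDiag_iff]
  exact (position_bijective _).1.ne h.2.2.2

theorem eq_or_eq_of_mem (h : CrossTogether E p u w) {z : Fin n}
    (hz : position (E.take p) z ∈ E[p]'h.1) : z = u ∨ z = w := by
  rw [h.edge_eq, Sym2.mem_iff] at hz
  exact hz.imp (fun h' => (position_bijective _).1 h') (fun h' => (position_bijective _).1 h')

theorem larger_label_eq {ι : Type*} [LinearOrder ι] {σ : ι → Fin n} (hσ : Function.Injective σ)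
    {a b a' b' : ι} (h : CrossTogether E p (σ a) (σ b)) (h' : CrossTogether E p (σ a') (σ b'))
    (hb : b < a) (hb' : b' < a') : a = a' := by
  have ha' := (h.eq_or_eq_of_mem h'.2.1).imp (fun e => hσ e) (fun e => hσ e)
  have hb'' := (h.eq_or_eq_of_mem h'.2.2.1).imp (fun e => hσ e) (fun e => hσ e)
  have hne : a' ≠ b' := fun hab => h'.2.2.2 (congrArg σ hab)
  rcases ha' with rfl | rfl
  · rfl
  · rcases hb'' with rfl | rfl
    · exact absurd hb (not_lt.2 hb'.le)
    · exact absurd rfl hne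

theorem exists_mem_walkSteps_left (h : CrossTogether E p u w) :
    ∃ a b, (p, a, b) ∈ walkSteps E u :=
  OrderedGraph.exists_mem_walkSteps h.1 h.2.1

end CrossTogether

def stepGraph (E : List (Sym2 (Fin n))) : SimpleGraph (Fin n) where
  Adj u w := ∃ p, CrossTogether E p u w
  symm := ⟨fun _ _ ⟨p, h⟩ => ⟨p, h.symm⟩⟩
  loopless := ⟨fun _ ⟨_, h⟩ => h.2.2.2 rfl⟩

theorem stepGraph_adj {E : List (Sym2 (Fin n))} {u w : Fin n} :
    (stepGraph E).Adj u w ↔ ∃ p, CrossTogether E p u w :=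
  Iff.rfl

theorem stepGraph_reachable_position (E : List (Sym2 (Fin n))) (p : ℕ) (x : Fin n) :
    (stepGraph E).Reachable x (position (E.take p) x) := by
  induction p generalizing x with
  | zero => rfl
  | succ p ih =>
    rw [List.take_add_one]
    cases hE : E[p]? with
    | none => simpa using ih x
    | some e =>
      obtain ⟨hp, rfl⟩ := List.getElem?_eq_some_iff.1 hE
      rw [Option.toList_some, position_append_singleton]
      -- the walk now standing where `x`'s walk is heading has just crossed paths with it
      obtain ⟨z, hz⟩ := (position_bijective (E.take p)).2 (cross E[p] (position (E.take p) x))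
      by_cases hzx : x = z
      · rw [← hz, ← hzx]
        exact ih x
      have hx : position (E.take p) x ∈ E[p] := by
        by_contra hx
        exact hzx ((position_bijective _).1 (by simpa [cross, hx] using hz.symm))
      have hadj : (stepGraph E).Adj x z := stepGraph_adj.2 ⟨p, hp, hx, hz ▸ cross_mem hx, hzx⟩
      exact hadj.reachable.trans (hz ▸ ih z)

theorem stepGraph_preconnected {E : List (Sym2 (Fin n))}
    (hconn : ∀ a b : Fin n, Relation.ReflTransGen (fun x y => ∃ e ∈ E, x ∈ e ∧ y ∈ e) a b) :
    (stepGraph E).Preconnected := by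
  have hedge {x y : Fin n} : (∃ e ∈ E, x ∈ e ∧ y ∈ e) → (stepGraph E).Reachable x y := by
    rintro ⟨e, he, hx, hy⟩
    obtain ⟨p, hp, rfl⟩ := List.getElem_of_mem he
    obtain ⟨u, rfl⟩ := (position_bijective (E.take p)).2 x
    obtain ⟨w, rfl⟩ := (position_bijective (E.take p)).2 y
    by_cases huw : u = w
    · rw [huw]
    have hadj : (stepGraph E).Adj u w := stepGraph_adj.2 ⟨p, hp, hx, hy, huw⟩
    exact (stepGraph_reachable_position E p u).symm.trans
      (hadj.reachable.trans (stepGraph_reachable_position E p w))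
  intro a b
  induction hconn a b with
  | refl => rfl
  | tail _ hxy ih => exact ih.trans (hedge hxy)

end OrderedGraph

/-- For a connected ordered graph on `[n]` (self-edges allowed), there exist
non-self edges `f_1, …, f_{n-1}` (given by their positions in the edge list)
and a labeling `v_0, …, v_{n-1}` of the vertices such that, for each
`ℓ ∈ {1, …, n-1}`, the edge `f_ℓ` is a step on the ordered edge walk
`w_{v_ℓ}` and also a step on some walk `w_{v_j}` with `j < ℓ`. -/
theorem connected_spanning_edge_choice {n : ℕ} (E : List (Sym2 (Fin n)))
    (hconn : ∀ a b : Fin n,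
      Relation.ReflTransGen (fun x y => ∃ e ∈ E, x ∈ e ∧ y ∈ e) a b) :
    ∃ (f : Fin (n - 1) → ℕ) (v : Fin n → Fin n),
      Function.Injective f ∧ Function.Bijective v ∧
      ∀ ℓ : Fin (n - 1),
        (∃ h : f ℓ < E.length, ¬ (E.get ⟨f ℓ, h⟩).IsDiag) ∧
        (∃ a b : Fin n,
          (f ℓ, a, b) ∈ walkSteps E (v ⟨(ℓ : ℕ) + 1, by have := ℓ.isLt; omega⟩)) ∧
        (∃ j : ℕ, j < (ℓ : ℕ) + 1 ∧ ∃ (hj : j < n) (a b : Fin n),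
          (f ℓ, a, b) ∈ walkSteps E (v ⟨j, hj⟩)) := by
  obtain ⟨σ, hσ⟩ := (OrderedGraph.stepGraph_preconnected hconn).exists_perm_forall_exists_lt_adj
  simp only [OrderedGraph.stepGraph_adj] at hσ
  choose j hj f hf using fun ℓ : Fin (n - 1) => hσ ⟨ℓ + 1, by omega⟩ (Nat.succ_pos _)
  refine ⟨f, σ, fun ℓ ℓ' hℓ => ?_, σ.bijective, fun ℓ =>
    ⟨⟨(hf ℓ).1, (hf ℓ).not_isDiag⟩, (hf ℓ).exists_mem_walkSteps_left,
      ⟨j ℓ, hj ℓ, (j ℓ).isLt, (hf ℓ).symm.exists_mem_walkSteps_left⟩⟩⟩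
  have := (hf ℓ).larger_label_eq σ.injective (hℓ ▸ hf ℓ') (hj ℓ) (hj ℓ')
  exact Fin.ext (by simpa using this)
end
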